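/- arXiv:1507.04165 — 2 statements merged into one kernel-verified Lean document; each statement's English description precedes it below -/
import Mathlib

section
/- Let G be a discrete subgroup of SL(2,ℂ). Then G acts properly discontinuously on its domain of discontinuity: for every compact subset K ⊆ Ω_G, the set {g ∈ G : g•K ∩ K ≠ ∅} is finite. -/
open Matrix

noncomputable section

abbrev SL2C := Matrix.SpecialLinearGroup (Fin 2) ℂ

/-- The complex projective line. -/
abbrev P1C := Projectivization ℂ (Fin 2 → ℂ)

instance : TopologicalSpace P1C :=
  inferInstanceAs (TopologicalSpace (Quotient (projectivizationSetoid ℂ (Fin 2 → ℂ))))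

/-- The action of `SL(2,ℂ)` on the projective line induced by the linear action. -/
def smulP (g : SL2C) (x : P1C) : P1C :=
  x.map (Matrix.SpecialLinearGroup.toLin' g).toLinearMap
    (Matrix.SpecialLinearGroup.toLin' g).injective

/-- `G` is discrete if it is a discrete subset of the space of 2x2 complex matrices. -/
def IsDiscreteSG (G : Subgroup SL2C) : Prop :=
  DiscreteTopology ((fun g : SL2C => (g : Matrix (Fin 2) (Fin 2) ℂ)) '' (G : Set SL2C))

/-- The domain of discontinuity: the union of all open sets `U` such that
`{g ∈ G : g•U ∩ U ≠ ∅}` is finite. -/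
def domOfDisc (G : Subgroup SL2C) : Set P1C :=
  ⋃₀ {U : Set P1C | IsOpen U ∧ {g : SL2C | g ∈ G ∧ (smulP g '' U ∩ U).Nonempty}.Finite}

/-- The limit set: the complement of the domain of discontinuity. -/
def limitSet (G : Subgroup SL2C) : Set P1C := (domOfDisc G)ᶜ

/-
Discreteness of `G` forces `‖gₙ‖ → ∞` along any sequence of distinct elements, so the rescaled
matrices `gₙ / ‖gₙ‖` subconverge to a nonzero matrix `M` with `det M = 0`, i.e. of rank one.
Away from the kernel line of `M` the `gₙ` push points towards the image line of `M`, and that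
image point is a limit point: an open set around it meets its `gₙ`-translates infinitely often.
The kernel line of `M` is the image line of `adj M`, the limit of the rescaled `gₙ⁻¹`, so it is a
limit point as well. Hence if `xₙ ∈ K` and `gₙ xₙ ∈ K` for infinitely many distinct `gₙ`, a limit
of `xₙ` or of `gₙ xₙ` lies in `K ∩ Λ_G`.
-/

open Projectivization Filter Function Topology

lemma Matrix.exists_mulVec_ne_zero {m n α : Type*} [Fintype n]
    [NonAssocSemiring α] {M : Matrix m n α} (hM : M ≠ 0) : ∃ v, M *ᵥ v ≠ 0 := by
  by_contra! h
  exact hM (Matrix.ext_iff_mulVec.2 fun v => by rw [h, Matrix.zero_mulVec])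

lemma Matrix.adjugate_ne_zero {R : Type*} [CommRing R] {M : Matrix (Fin 2) (Fin 2) R}
    (hM : M ≠ 0) : M.adjugate ≠ 0 := fun h =>
  hM (by simpa [h] using (Matrix.adjugate_adjugate' M).symm)

section Wedge

variable {R : Type*} [CommRing R]

def wedge (v w : Fin 2 → R) : R := v 0 * w 1 - v 1 * w 0

lemma wedge_self (v : Fin 2 → R) : wedge v v = 0 := by
  rw [wedge, mul_comm, sub_self]

lemma wedge_smul_left (c : R) (v w : Fin 2 → R) : wedge (c • v) w = c * wedge v w := by
  simp only [wedge, Pi.smul_apply, smul_eq_mul]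
  ring

lemma wedge_mulVec (M : Matrix (Fin 2) (Fin 2) R) (v w : Fin 2 → R) :
    wedge (M *ᵥ v) (M *ᵥ w) = M.det * wedge v w := by
  simp only [wedge, Matrix.mulVec_fin_two, Matrix.det_fin_two, Matrix.cons_val_zero,
    Matrix.cons_val_one]
  ring

variable {K : Type*} [Field K]

lemma mk_eq_mk_of_wedge_eq_zero {v w : Fin 2 → K} (hv : v ≠ 0) (hw : w ≠ 0)
    (h : wedge v w = 0) : mk K v hv = mk K w hw := by
  rw [wedge] at h
  rw [mk_eq_mk_iff']
  by_cases hw0 : w 0 = 0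
  · have hw1 : w 1 ≠ 0 := fun hw1 => hw (funext (Fin.forall_fin_two.2 ⟨hw0, hw1⟩))
    refine ⟨v 1 / w 1, funext (Fin.forall_fin_two.2 ⟨?_, ?_⟩)⟩
    · simpa [hw0, hw1, eq_comm] using h
    · simp [hw1]
  · refine ⟨v 0 / w 0, funext (Fin.forall_fin_two.2 ⟨by simp [hw0], ?_⟩)⟩
    simp only [Pi.smul_apply, smul_eq_mul]
    field_simp
    linear_combination h

lemma wedge_eq_zero_of_mulVec_eq_zero {M : Matrix (Fin 2) (Fin 2) K} (hM : M ≠ 0) {v w : Fin 2 → K}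
    (hv : M *ᵥ v = 0) (hw : M *ᵥ w = 0) : wedge v w = 0 := by
  have hrow : ∀ {u : Fin 2 → K}, M *ᵥ u = 0 → ∀ i, M i 0 * u 0 + M i 1 * u 1 = 0 :=
    fun hu i => by
      simpa [Matrix.mulVec, dotProduct, Fin.sum_univ_two, -Matrix.mulVec_fin_two] using
        congrFun hu i
  have : wedge v w • M = 0 := by
    refine Matrix.ext fun i => Fin.forall_fin_two.2 ⟨?_, ?_⟩ <;>
      simp only [wedge, Matrix.smul_apply, smul_eq_mul, Matrix.zero_apply]
    · linear_combination w 1 * hrow hv i - v 1 * hrow hw i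
    · linear_combination -w 0 * hrow hv i + v 0 * hrow hw i
  exact (smul_eq_zero.1 this).resolve_right hM

lemma mk_mulVec_eq_of_det_eq_zero {M : Matrix (Fin 2) (Fin 2) K} (hM : M.det = 0) {v w : Fin 2 → K}
    (hv : M *ᵥ v ≠ 0) (hw : M *ᵥ w ≠ 0) : mk K (M *ᵥ v) hv = mk K (M *ᵥ w) hw :=
  mk_eq_mk_of_wedge_eq_zero hv hw (by rw [wedge_mulVec, hM, zero_mul])

end Wedge

namespace Matrix.SpecialLinearGroup

variable {n R : Type*} [Fintype n] [DecidableEq n] [CommRing R]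

lemma coe_ne_zero [Nonempty n] [Nontrivial R] (g : SpecialLinearGroup n R) :
    (g : Matrix n n R) ≠ 0 := fun h => g.det_ne_zero (by rw [h, Matrix.det_zero])

lemma mulVec_ne_zero (g : SpecialLinearGroup n R) {v : n → R} (hv : v ≠ 0) :
    (g : Matrix n n R) *ᵥ v ≠ 0 := by
  intro h
  have := congrArg (((g⁻¹ : SpecialLinearGroup n R) : Matrix n n R) *ᵥ ·) h
  rw [mulVec_mulVec, ← coe_mul, inv_mul_cancel, coe_one, one_mulVec, mulVec_zero] at this
  exact hv this

end Matrix.SpecialLinearGroup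

local notation "M₂" => Matrix (Fin 2) (Fin 2) ℂ

lemma tendsto_mk {α : Type*} {l : Filter α} {f : α → Fin 2 → ℂ} {v : Fin 2 → ℂ}
    (hf : ∀ a, f a ≠ 0) (hv : v ≠ 0) (h : Tendsto f l (𝓝 v)) :
    Tendsto (fun a => mk ℂ (f a) (hf a)) l (𝓝 (mk ℂ v hv)) :=
  (continuous_quotient_mk'.tendsto ⟨v, hv⟩).comp (tendsto_subtype_rng.2 h)

def wedgeDist (w : Fin 2 → ℂ) : P1C → ℝ :=
  Projectivization.lift (fun v => ‖wedge v.1 w‖ / ‖v.1‖) <| by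
    rintro ⟨-, hv⟩ ⟨u, -⟩ t rfl
    have ht : t ≠ 0 := by rintro rfl; simp at hv
    simp only [wedge_smul_left, norm_mul, norm_smul]
    exact mul_div_mul_left _ _ (norm_ne_zero_iff.2 ht)

lemma continuous_wedgeDist (w : Fin 2 → ℂ) : Continuous (wedgeDist w) := by
  have hwedge : Continuous fun v => wedge v w := by
    unfold wedge
    fun_prop
  refine continuous_quot_lift _ (Continuous.div ?_ ?_ fun v => norm_ne_zero_iff.2 v.2)
  · exact (hwedge.comp continuous_subtype_val).norm
  · exact continuous_subtype_val.norm

lemma wedgeDist_mk (w v : Fin 2 → ℂ) (hv : v ≠ 0) :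
    wedgeDist w (mk ℂ v hv) = ‖wedge v w‖ / ‖v‖ := rfl

instance : T2Space P1C where
  t2 x y hxy := by
    induction x using Projectivization.ind with | h v hv => ?_
    induction y using Projectivization.ind with | h w hw => ?_
    refine separated_by_continuous (continuous_wedgeDist w) ?_
    rw [wedgeDist_mk, wedgeDist_mk, wedge_self, norm_zero, zero_div]
    exact div_ne_zero (norm_ne_zero_iff.2 fun h => hxy (mk_eq_mk_of_wedge_eq_zero hv hw h))
      (norm_ne_zero_iff.2 hv)

lemma smulP_mk (g : SL2C) {v : Fin 2 → ℂ} (hv : v ≠ 0) :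
    smulP g (mk ℂ v hv) = mk ℂ ((g : M₂) *ᵥ v) (g.mulVec_ne_zero hv) := by
  rw [smulP, Projectivization.map_mk]
  rfl

lemma tendsto_smulP_mk {α : Type*} {l : Filter α} {g : α → SL2C} {c : α → ℂ} {M : M₂}
    {v : α → Fin 2 → ℂ} {w : Fin 2 → ℂ} (hc : ∀ a, c a ≠ 0)
    (hg : Tendsto (fun a => c a • (g a : M₂)) l (𝓝 M)) (hv : ∀ a, v a ≠ 0)
    (hvw : Tendsto v l (𝓝 w)) (hMw : M *ᵥ w ≠ 0) :
    Tendsto (fun a => smulP (g a) (mk ℂ (v a) (hv a))) l (𝓝 (mk ℂ (M *ᵥ w) hMw)) := by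
  have hne : ∀ a, (c a • (g a : M₂)) *ᵥ v a ≠ 0 := fun a => by
    rw [Matrix.smul_mulVec]
    exact smul_ne_zero (hc a) ((g a).mulVec_ne_zero (hv a))
  have heq : ∀ a, smulP (g a) (mk ℂ (v a) (hv a)) = mk ℂ _ (hne a) := fun a => by
    rw [smulP_mk, eq_comm, mk_eq_mk_iff']
    exact ⟨c a, (Matrix.smul_mulVec _ _ _).symm⟩
  have hlim : Tendsto (fun a => (c a • (g a : M₂)) *ᵥ v a) l (𝓝 (M *ᵥ w)) := by
    have hcont : Continuous fun p : M₂ × (Fin 2 → ℂ) => p.1 *ᵥ p.2 :=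
      continuous_fst.matrix_mulVec continuous_snd
    have h := (hcont.tendsto (M, w)).comp (hg.prodMk_nhds hvw)
    exact h
  rw [funext heq]
  exact tendsto_mk hne hMw hlim

lemma exists_mk_mem_mulVec_ne_zero {M : M₂} (hM : M ≠ 0) {U : Set P1C} (hU : IsOpen U)
    {a : Fin 2 → ℂ} (ha : a ≠ 0) (haU : mk ℂ a ha ∈ U) :
    ∃ v, ∃ hv : v ≠ 0, mk ℂ v hv ∈ U ∧ M *ᵥ v ≠ 0 := by
  by_cases hMa : M *ᵥ a = 0
  swap
  · exact ⟨a, ha, haU, hMa⟩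
  -- perturb `a` off the kernel of `M` along a direction `u` that `M` does not kill
  obtain ⟨u, hu⟩ := Matrix.exists_mulVec_ne_zero hM
  have hMt : ∀ t : ℂ, M *ᵥ (a + t • u) = t • (M *ᵥ u) := fun t => by
    rw [Matrix.mulVec_add, Matrix.mulVec_smul, hMa, zero_add]
  have hne : ∀ t : ℂ, a + t • u ≠ 0 := fun t h => by
    rcases eq_or_ne t 0 with rfl | ht
    · exact ha (by simpa using h)
    · exact smul_ne_zero ht hu (by rw [← hMt, h, Matrix.mulVec_zero])
  have hlim : Tendsto (fun t : ℂ => a + t • u) (𝓝[≠] 0) (𝓝 a) := by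
    have hcont : Continuous fun t : ℂ => a + t • u := by fun_prop
    simpa using (hcont.tendsto 0).mono_left nhdsWithin_le_nhds
  obtain ⟨t, htU, ht⟩ := ((tendsto_mk hne ha hlim).eventually (hU.mem_nhds haU)).and
    eventually_mem_nhdsWithin |>.exists
  exact ⟨a + t • u, hne t, htU, by rw [hMt]; exact smul_ne_zero ht hu⟩

lemma mulVec_mem_limitSet {G : Subgroup SL2C} {g : ℕ → SL2C} (hG : ∀ n, g n ∈ G)
    (hinj : Injective g) {c : ℕ → ℂ} (hc : ∀ n, c n ≠ 0) {M : M₂} (hM : M ≠ 0)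
    (hdet : M.det = 0) (hconv : Tendsto (fun n => c n • (g n : M₂)) atTop (𝓝 M))
    {w : Fin 2 → ℂ} (hw : M *ᵥ w ≠ 0) : mk ℂ (M *ᵥ w) hw ∈ limitSet G := by
  rintro ⟨U, ⟨hU, hfin⟩, hwU⟩
  obtain ⟨v, hv, hvU, hMv⟩ := exists_mk_mem_mulVec_ne_zero hM hU hw hwU
  have horbit := tendsto_smulP_mk hc hconv (fun _ => hv) tendsto_const_nhds hMv
  rw [mk_mulVec_eq_of_det_eq_zero hdet hMv hw] at horbit
  have hreturn : ∀ᶠ n in atTop, g n ∈ {g : SL2C | g ∈ G ∧ (smulP g '' U ∩ U).Nonempty} :=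
    (horbit.eventually_mem (hU.mem_nhds hwU)).mono fun n hn => ⟨hG n, _, ⟨_, hvU, rfl⟩, hn⟩
  exact ((Nat.frequently_atTop_iff_infinite.1 hreturn.frequently).image hinj.injOn).mono
    (Set.image_subset_iff.2 fun _ hn => hn) hfin

lemma mem_limitSet_of_mulVec_eq_zero {G : Subgroup SL2C} {g : ℕ → SL2C} (hG : ∀ n, g n ∈ G)
    (hinj : Injective g) {c : ℕ → ℂ} (hc : ∀ n, c n ≠ 0) {M : M₂} (hM : M ≠ 0)
    (hdet : M.det = 0) (hconv : Tendsto (fun n => c n • (g n : M₂)) atTop (𝓝 M))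
    {w : Fin 2 → ℂ} (hw : w ≠ 0) (hMw : M *ᵥ w = 0) : mk ℂ w hw ∈ limitSet G := by
  -- the rescaled inverses converge to `adj M`, whose image is the kernel of `M`
  have hinv : Tendsto (fun n => c n • (((g n)⁻¹ : SL2C) : M₂)) atTop (𝓝 M.adjugate) := by
    have heq : ∀ n, c n • (((g n)⁻¹ : SL2C) : M₂) = (c n • (g n : M₂)).adjugate := fun n => by
      rw [Matrix.SpecialLinearGroup.coe_inv, Matrix.adjugate_smul]
      simp
    simp only [heq]
    exact ((continuous_id.matrix_adjugate).tendsto M).comp hconv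
  obtain ⟨w', hw'⟩ := Matrix.exists_mulVec_ne_zero (Matrix.adjugate_ne_zero hM)
  have hker : M *ᵥ (M.adjugate *ᵥ w') = 0 := by
    rw [Matrix.mulVec_mulVec, Matrix.mul_adjugate, hdet, zero_smul, Matrix.zero_mulVec]
  have hmem := mulVec_mem_limitSet (fun n => G.inv_mem (hG n)) (inv_injective.comp hinj) hc
    (Matrix.adjugate_ne_zero hM) (by simp [Matrix.det_adjugate, hdet]) hinv hw'
  rwa [mk_eq_mk_of_wedge_eq_zero hw' hw (wedge_eq_zero_of_mulVec_eq_zero hM hker hMw)] at hmem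

attribute [local instance] Matrix.normedAddCommGroup Matrix.normedSpace

lemma IsDiscreteSG.tendsto_norm_atTop {G : Subgroup SL2C} (hdisc : IsDiscreteSG G)
    {g : ℕ → SL2C} (hG : ∀ n, g n ∈ G) (hinj : Injective g) :
    Tendsto (fun n => ‖(g n : M₂)‖) atTop atTop := by
  have hD : IsDiscrete (G : Set SL2C) := by
    have := (isDiscrete_iff_discreteTopology.2 hdisc).preimage (X := SL2C)
      (f := (↑)) continuous_subtype_val.continuousOn Subtype.val_injective
    rwa [Set.preimage_image_eq (G : Set SL2C) (f := fun g : SL2C => (g : M₂))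
      Subtype.val_injective] at this
  have hseq : Tendsto (fun n => (⟨g n, hG n⟩ : G)) atTop cofinite :=
    have hinj' : Injective fun n => (⟨g n, hG n⟩ : G) := fun a b hab =>
      hinj (congrArg Subtype.val hab)
    Nat.cofinite_eq_atTop ▸ hinj'.tendsto_cofinite
  exact tendsto_norm_cocompact_atTop.comp
    (Matrix.SpecialLinearGroup.isClosedEmbedding_val.tendsto_cocompact.comp
      ((G.tendsto_coe_cofinite_of_discrete hD).comp hseq))

lemma det_eq_zero_of_tendsto_inv_norm_smul {α : Type*} {l : Filter α} [l.NeBot]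
    {g : α → SL2C} {M : M₂} (hg : Tendsto (fun a => ‖(g a : M₂)‖) l atTop)
    (hM : Tendsto (fun a => ((‖(g a : M₂)‖⁻¹ : ℝ) : ℂ) • (g a : M₂)) l (𝓝 M)) :
    M.det = 0 := by
  have hc : Tendsto (fun a => ((‖(g a : M₂)‖⁻¹ : ℝ) : ℂ)) l (𝓝 0) := by
    simpa [Function.comp_def] using
      (Complex.continuous_ofReal.tendsto 0).comp (tendsto_inv_atTop_zero.comp hg)
  refine tendsto_nhds_unique (((continuous_id.matrix_det).tendsto M).comp hM) ?_
  simpa [Function.comp_def] using hc.pow 2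

def unitRep (x : P1C) : Fin 2 → ℂ := ((‖x.rep‖⁻¹ : ℝ) : ℂ) • x.rep

lemma norm_unitRep (x : P1C) : ‖unitRep x‖ = 1 := by
  simpa [unitRep] using norm_smul_inv_norm (𝕜 := ℂ) x.rep_nonzero

lemma unitRep_ne_zero (x : P1C) : unitRep x ≠ 0 :=
  smul_ne_zero (by simpa using x.rep_nonzero) x.rep_nonzero

lemma mk_unitRep (x : P1C) : mk ℂ (unitRep x) (unitRep_ne_zero x) = x := by
  conv_rhs => rw [← x.mk_rep]
  exact (mk_eq_mk_iff' _ _ _ _ _).2 ⟨_, rfl⟩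

theorem exists_subseq_tendsto_mem_limitSet {G : Subgroup SL2C} (hdisc : IsDiscreteSG G)
    {g : ℕ → SL2C} (hG : ∀ n, g n ∈ G) (hinj : Injective g) (x : ℕ → P1C) :
    ∃ φ : ℕ → ℕ, StrictMono φ ∧ ∃ p ∈ limitSet G,
      Tendsto (fun k => x (φ k)) atTop (𝓝 p) ∨
        Tendsto (fun k => smulP (g (φ k)) (x (φ k))) atTop (𝓝 p) := by
  set c : ℕ → ℂ := fun n => ((‖(g n : M₂)‖⁻¹ : ℝ) : ℂ)
  have hc : ∀ n, c n ≠ 0 := fun n => by simpa [c] using (g n).coe_ne_zero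
  obtain ⟨w, hw, φ, hφ, hu⟩ := (isCompact_sphere (0 : Fin 2 → ℂ) 1).tendsto_subseq
    (x := fun n => unitRep (x n)) fun n => mem_sphere_zero_iff_norm.2 (norm_unitRep (x n))
  obtain ⟨M, hM, ψ, hψ, hcg⟩ := (isCompact_sphere (0 : M₂) 1).tendsto_subseq
    (x := fun k => c (φ k) • (g (φ k) : M₂)) fun k => by
      simpa [c] using norm_smul_inv_norm (𝕜 := ℂ) (g (φ k)).coe_ne_zero
  have hw0 : w ≠ 0 := ne_zero_of_mem_sphere one_ne_zero ⟨w, hw⟩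
  have hM0 : M ≠ 0 := ne_zero_of_mem_sphere one_ne_zero ⟨M, hM⟩
  have hinj' : Injective fun k => g (φ (ψ k)) := hinj.comp (hφ.comp hψ).injective
  have hG' : ∀ k, g (φ (ψ k)) ∈ G := fun k => hG _
  have hdet : M.det = 0 :=
    det_eq_zero_of_tendsto_inv_norm_smul (hdisc.tendsto_norm_atTop hG' hinj') hcg
  have hu' : Tendsto (fun k => unitRep (x (φ (ψ k)))) atTop (𝓝 w) := hu.comp hψ.tendsto_atTop
  refine ⟨fun k => φ (ψ k), hφ.comp hψ, ?_⟩
  by_cases hMw : M *ᵥ w = 0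
  · refine ⟨mk ℂ w hw0,
      mem_limitSet_of_mulVec_eq_zero hG' hinj' (fun _ => hc _) hM0 hdet hcg hw0 hMw, Or.inl ?_⟩
    simpa only [mk_unitRep] using tendsto_mk (fun _ => unitRep_ne_zero _) hw0 hu'
  · refine ⟨mk ℂ (M *ᵥ w) hMw,
      mulVec_mem_limitSet hG' hinj' (fun _ => hc _) hM0 hdet hcg hMw, Or.inr ?_⟩
    simpa only [mk_unitRep] using
      tendsto_smulP_mk (fun _ => hc _) hcg (fun _ => unitRep_ne_zero _) hu' hMw

/-- A discrete subgroup of `SL(2,ℂ)` acts properly discontinuously on its domain of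
discontinuity. -/
theorem properlyDiscontinuous_on_domOfDisc (G : Subgroup SL2C)
    (hdisc : IsDiscreteSG G) (K : Set P1C) (hK : IsCompact K) (hKsub : K ⊆ domOfDisc G) :
    {g : SL2C | g ∈ G ∧ (smulP g '' K ∩ K).Nonempty}.Finite := by
  by_contra hinf
  set e := Set.Infinite.natEmbedding _ hinf
  have hx : ∀ n, ∃ x ∈ K, smulP (e n) x ∈ K := fun n => by
    obtain ⟨-, ⟨x, hx, rfl⟩, hgx⟩ := (e n).2.2
    exact ⟨x, hx, hgx⟩
  choose x hxK hgxK using hx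
  obtain ⟨φ, -, p, hp, hlim⟩ := exists_subseq_tendsto_mem_limitSet hdisc (fun n => (e n).2.1)
    (Subtype.val_injective.comp e.injective) x
  refine hp (hKsub ?_)
  rcases hlim with hlim | hlim
  · exact hK.isClosed.mem_of_tendsto hlim (.of_forall fun _ => hxK _)
  · exact hK.isClosed.mem_of_tendsto hlim (.of_forall fun _ => hgxK _)
end
end

section
/- Let G be a discrete subgroup of SL(2,ℝ). Then G acts properly discontinuously on the hyperbolic upper half-plane ℍ: for every compact subset K ⊆ ℍ, the set {g ∈ G : g•K ∩ K ≠ ∅} is finite. -/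
open Matrix UpperHalfPlane

noncomputable section

abbrev SL2R := Matrix.SpecialLinearGroup (Fin 2) ℝ

/-- `G` is discrete if it is a discrete subset of the space of 2x2 real matrices. -/
def IsDiscreteSGR (G : Subgroup SL2R) : Prop :=
  DiscreteTopology ((fun g : SL2R => (g : Matrix (Fin 2) (Fin 2) ℝ)) '' (G : Set SL2R))

lemma IsDiscreteSGR.discreteTopology {G : Subgroup SL2R} (hG : IsDiscreteSGR G) :
    DiscreteTopology G := by
  suffices IsDiscrete (G : Set SL2R) from this.to_subtype
  rw [← Set.preimage_image_eq (G : Set SL2R) Subtype.val_injective]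
  exact (isDiscrete_iff_discreteTopology.mpr hG).preimage continuous_subtype_val.continuousOn
    Subtype.val_injective

/-- A discrete subgroup of `SL(2,ℝ)` acts properly discontinuously on the hyperbolic
upper half-plane. -/
theorem properlyDiscontinuous_on_upperHalfPlane (G : Subgroup SL2R)
    (hdisc : IsDiscreteSGR G) (K : Set ℍ) (hK : IsCompact K) :
    {g : SL2R | g ∈ G ∧ ((fun z : ℍ => g • z) '' K ∩ K).Nonempty}.Finite := by
  have := hdisc.discreteTopology
  have hfin := (instProperlyDiscontinuousSL2RSubgroup G).finite_disjoint_inter_image hK hK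
  refine (hfin.image Subtype.val).subset ?_
  rintro g ⟨hg, hne⟩
  exact ⟨⟨g, hg⟩, hne, rfl⟩
end
end
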